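/- arXiv:math/0609707 — 3 statements merged into one kernel-verified Lean document; each statement's English description precedes it below -/
import Mathlib

section
/- A graph G is a minor of a graph D if and only if a graph isomorphic to D is a decomposition of G with width 1. -/
open scoped Classical

/-- `H` is a minor of `G`: there are pairwise disjoint branch sets in `G`,
one for each vertex of `H`, each inducing a connected subgraph of `G`,
with an edge of `G` between the branch sets of any two adjacent vertices of `H`. -/
def SimpleGraph.MinorOf {α : Type} {β : Type} (H : SimpleGraph α) (G : SimpleGraph β) : Prop :=
  ∃ f : α → Set β,
    (∀ a, (G.induce (f a)).Connected) ∧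
    (Pairwise fun a b => Disjoint (f a) (f b)) ∧
    (∀ ⦃a b : α⦄, H.Adj a b → ∃ x ∈ f a, ∃ y ∈ f b, G.Adj x y)

/-- A drawing of a graph `G` in the plane: vertices are distinct points, each edge is a
simple curve between its endpoints meeting vertex points only at its own endpoints, and
no three edges meet at a common point other than a common endpoint. -/
structure Drawing {α : Type} (G : SimpleGraph α) where
  vmap : α → ℝ × ℝ
  vmap_inj : Function.Injective vmap
  emap : G.edgeSet → C(unitInterval, ℝ × ℝ)
  emap_inj : ∀ e, Function.Injective (emap e)
  endpoints : ∀ e : G.edgeSet, ∃ u v : α, (e : Sym2 α) = s(u, v) ∧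
      emap e 0 = vmap u ∧ emap e 1 = vmap v
  vertex_hit : ∀ (e : G.edgeSet) (w : α), vmap w ∈ Set.range (emap e) → w ∈ (e : Sym2 α)
  no_triple : ∀ (e f g : G.edgeSet) (p : ℝ × ℝ), e ≠ f → e ≠ g → f ≠ g →
      p ∈ Set.range (emap e) → p ∈ Set.range (emap f) → p ∈ Set.range (emap g) →
      ∃ w : α, vmap w = p ∧ w ∈ (e : Sym2 α) ∧ w ∈ (f : Sym2 α) ∧ w ∈ (g : Sym2 α)

/-- The crossings of a drawing: points together with an unordered pair of distinct edges
whose curves both pass through the point, other than (the image of) a common endpoint. -/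
def Drawing.crossings {α : Type} {G : SimpleGraph α} (d : Drawing G) :
    Set ((ℝ × ℝ) × Sym2 G.edgeSet) :=
  {x | ∃ e f : G.edgeSet, x.2 = s(e, f) ∧ e ≠ f ∧
    x.1 ∈ Set.range (d.emap e) ∧ x.1 ∈ Set.range (d.emap f) ∧
    ¬ ∃ w : α, d.vmap w = x.1 ∧ w ∈ (e : Sym2 α) ∧ w ∈ (f : Sym2 α)}

/-- The number of crossings of a drawing. -/
noncomputable def Drawing.numCrossings {α : Type} {G : SimpleGraph α} (d : Drawing G) : ℕ∞ :=
  d.crossings.encard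

/-- The crossing number of `G`: the minimum number of crossings in a drawing of `G`. -/
noncomputable def crossingNumber {α : Type} (G : SimpleGraph α) : ℕ∞ :=
  ⨅ d : Drawing G, d.numCrossings

/-- A graph is planar if it has a crossing-free drawing. -/
def SimpleGraph.IsPlanar {α : Type} (G : SimpleGraph α) : Prop :=
  ∃ d : Drawing G, d.crossings = ∅

/-- The minor crossing number of `G`: the minimum crossing number of a (finite) graph
that contains `G` as a minor. -/
noncomputable def minorCrossingNumber {α : Type} (G : SimpleGraph α) : ℕ∞ :=
  sInf {n : ℕ∞ | ∃ (β : Type) (_ : Fintype β) (G' : SimpleGraph β),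
    G.MinorOf G' ∧ crossingNumber G' = n}

/-- The maximum degree of a graph. -/
noncomputable def SimpleGraph.maxDeg {α : Type} (G : SimpleGraph α) : ℕ :=
  ⨆ v : α, (G.neighborSet v).ncard

/-- A decomposition of a graph `G`: a (finite) graph whose vertices are bags of vertices
of `G` (distinct vertices may carry equal bags), such that for each vertex `v` of `G` the
bags containing `v` induce a connected nonempty subgraph, and for each edge `vw` of `G`
the subgraphs induced by the bags containing `v` resp. `w` touch. -/
structure Decomposition {α : Type} (G : SimpleGraph α) where
  B : Type
  fin : Fintype B
  graph : SimpleGraph B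
  bags : B → Finset α
  conn : ∀ v : α, (graph.induce {b : B | v ∈ bags b}).Connected
  touch : ∀ ⦃v w : α⦄, G.Adj v w →
    ∃ b c : B, v ∈ bags b ∧ w ∈ bags c ∧ (b = c ∨ graph.Adj b c)

namespace Decomposition

variable {α : Type} {G : SimpleGraph α}

/-- The width of a decomposition: the maximum cardinality of a bag. -/
noncomputable def width (W : Decomposition G) : ℕ := ⨆ b : W.B, (W.bags b).card

/-- The order of a decomposition: the number of bags. -/
noncomputable def order (W : Decomposition G) : ℕ :=
  letI := W.fin
  Fintype.card W.B

/-- The degree of a decomposition: the maximum degree of its graph. -/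
noncomputable def degree (W : Decomposition G) : ℕ := W.graph.maxDeg

/-- A decomposition is planar if its graph is planar. -/
def IsPlanar (W : Decomposition G) : Prop := W.graph.IsPlanar

end Decomposition

/-- A graph `G` is a minor of a graph `D` if and only if a graph isomorphic to `D` is a
decomposition of `G` with width `1`. -/
theorem stmt2 {α β : Type} [Fintype α] [Fintype β] (G : SimpleGraph α) (D : SimpleGraph β) :
    G.MinorOf D ↔ ∃ W : Decomposition G, Nonempty (W.graph ≃g D) ∧ W.width ≤ 1 := by
  constructor
  · rintro ⟨f, hconn, hdisj, hadj⟩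
    refine ⟨⟨β, inferInstance, D, fun b => (Set.toFinite {a | b ∈ f a}).toFinset, ?_, ?_⟩, ?_, ?_⟩
    · intro v
      have hset : {b : β | v ∈ (Set.toFinite {a | b ∈ f a}).toFinset} = f v := by
        ext b; simp
      rw [hset]; exact hconn v
    · intro v w h
      obtain ⟨x, hx, y, hy, hxy⟩ := hadj h
      exact ⟨x, y, by simpa using hx, by simpa using hy, Or.inr hxy⟩
    · exact ⟨SimpleGraph.Iso.refl⟩
    · have hcard : ∀ b : β, ((Set.toFinite {a | b ∈ f a}).toFinset).card ≤ 1 := by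
        intro b
        refine Finset.card_le_one.2 fun a ha a' ha' => ?_
        simp only [Set.Finite.mem_toFinset, Set.mem_setOf_eq] at ha ha'
        by_contra hne
        exact Set.disjoint_left.1 (hdisj hne) ha ha'
      rcases isEmpty_or_nonempty β with h | h
      · simp [Decomposition.width, ciSup_of_empty]
      · exact ciSup_le fun b => hcard b
  · rintro ⟨W, ⟨e⟩, hw⟩
    letI := W.fin
    have hcard : ∀ b : W.B, (W.bags b).card ≤ 1 := fun b =>
      (le_ciSup (Set.Finite.bddAbove (Set.finite_range _)) b).trans hw
    refine ⟨fun a => {b : β | a ∈ W.bags (e.symm b)}, ?_, ?_, ?_⟩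
    · intro a
      have iso2 : (W.graph.induce {b : W.B | a ∈ W.bags b}) ≃g
          (D.induce {b : β | a ∈ W.bags (e.symm b)}) :=
        { toFun := fun x => ⟨e x.1, by
            show a ∈ W.bags (e.symm (e x.1))
            rw [e.symm_apply_apply]; exact x.2⟩
          invFun := fun y => ⟨e.symm y.1, y.2⟩
          left_inv := fun x => by simp
          right_inv := fun y => by simp
          map_rel_iff' := by
            intro x y
            simp [SimpleGraph.comap, e.map_rel_iff] }
      exact iso2.connected_iff.mp (W.conn a)
    · intro a a' hne
      rw [Set.disjoint_left]
      intro b hb hb'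
      simp only [Set.mem_setOf_eq] at hb hb'
      exact hne (Finset.card_le_one.mp (hcard _) a hb a' hb')
    · intro v w hvw
      obtain ⟨b, c, hv, hw', hbc⟩ := W.touch hvw
      rcases hbc with rfl | hbc
      · exact absurd (Finset.card_le_one.mp (hcard _) v hv w hw') hvw.ne
      · exact ⟨e b, by simp [hv], e c, by simp [hw'], e.map_rel_iff.mpr hbc⟩
end

section
/- Every graph G has a planar decomposition of width 2 and order |V(G)| + cr(G). -/
open scoped Classical

namespace CrossAux

open Set

variable {α : Type} [Fintype α] (G : SimpleGraph α)

noncomputable def pos : α → ℝ := fun v => ((Fintype.equivFin α v : ℕ) : ℝ)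

lemma pos_inj : Function.Injective (pos (α := α)) := by
  intro a b h
  exact (Fintype.equivFin α).injective (Fin.ext (Nat.cast_injective h))

lemma pos_nat (v : α) : ∃ n : ℕ, pos v = (n : ℝ) := ⟨_, rfl⟩

noncomputable instance : Fintype G.edgeSet := (Set.toFinite _).fintype

noncomputable def kf (e : G.edgeSet) : ℕ := (Fintype.equivFin G.edgeSet e : ℕ) + 1

lemma kf_inj : Function.Injective (kf G) := by
  intro a b h
  exact (Fintype.equivFin G.edgeSet).injective (Fin.ext (Nat.succ_injective h))

lemma kf_pos (e : G.edgeSet) : 0 < kf G e := Nat.succ_pos _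

lemma kf_le (e : G.edgeSet) : kf G e ≤ Fintype.card G.edgeSet := by
  have := (Fintype.equivFin G.edgeSet e).2
  unfold kf; omega

noncomputable def del : ℝ := 1 / (2 * (Fintype.card G.edgeSet : ℝ)^2 + 1)

lemma del_pos : 0 < del G := by
  unfold del
  positivity

lemma kk_del_lt (e f : G.edgeSet) : (kf G e : ℝ) * kf G f * del G < 1/2 := by
  have h1 : (kf G e : ℝ) ≤ (Fintype.card G.edgeSet : ℝ) := by exact_mod_cast kf_le G e
  have h2 : (kf G f : ℝ) ≤ (Fintype.card G.edgeSet : ℝ) := by exact_mod_cast kf_le G f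
  have h0e : (0:ℝ) < kf G e := by exact_mod_cast kf_pos G e
  have h0f : (0:ℝ) < kf G f := by exact_mod_cast kf_pos G f
  set K : ℝ := (Fintype.card G.edgeSet : ℝ) with hK
  have hK0 : 0 < K := lt_of_lt_of_le h0e h1
  have : (kf G e : ℝ) * kf G f ≤ K^2 := by nlinarith
  have hlt : K^2 < (2 * K^2 + 1) / 2 := by nlinarith
  have hd : del G = 1 / (2 * K^2 + 1) := rfl
  rw [hd, mul_one_div, div_lt_div_iff₀ (by positivity) (by norm_num : (0:ℝ) < 2)]
  nlinarith [mul_pos h0e h0f]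

noncomputable def lo : Sym2 α → ℝ :=
  Sym2.lift ⟨fun a b => min (pos a) (pos b), fun a b => min_comm _ _⟩

noncomputable def hi : Sym2 α → ℝ :=
  Sym2.lift ⟨fun a b => max (pos a) (pos b), fun a b => max_comm _ _⟩

lemma edge_rep (e : G.edgeSet) : ∃ a b : α, a ≠ b ∧ (e : Sym2 α) = s(a, b) ∧
    pos a = lo (e : Sym2 α) ∧ pos b = hi (e : Sym2 α) := by
  obtain ⟨q, hq⟩ := e
  induction q using Sym2.ind with
  | _ x y =>
    simp only [SimpleGraph.mem_edgeSet] at hq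
    rcases le_total (pos x) (pos y) with h | h
    · exact ⟨x, y, hq.ne, rfl, by simp [lo, min_eq_left h], by simp [hi, max_eq_right h]⟩
    · exact ⟨y, x, hq.ne.symm, Sym2.eq_swap.symm, by simp [lo, min_eq_right h],
        by simp [hi, max_eq_left h]⟩

lemma lo_nat (e : G.edgeSet) : ∃ n : ℕ, lo (e : Sym2 α) = (n : ℝ) := by
  obtain ⟨a, b, _, _, ha, _⟩ := edge_rep G e
  exact ha ▸ pos_nat a

lemma hi_nat (e : G.edgeSet) : ∃ n : ℕ, hi (e : Sym2 α) = (n : ℝ) := by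
  obtain ⟨a, b, _, _, _, hb⟩ := edge_rep G e
  exact hb ▸ pos_nat b

lemma lo_lt_hi (e : G.edgeSet) : lo (e : Sym2 α) < hi (e : Sym2 α) := by
  obtain ⟨a, b, hab, he, _, _⟩ := edge_rep G e
  have hne : pos a ≠ pos b := fun h => hab (pos_inj h)
  rw [he]
  simp only [lo, hi, Sym2.lift_mk]
  exact min_lt_max.2 hne

-- gap lemmas for naturals embedded in ℝ
lemma nat_cast_eq_of_abs_lt {m n : ℕ} (h1 : (m:ℝ) - n < 1) (h2 : (n:ℝ) - m < 1) : m = n := by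
  by_contra hne
  rcases Nat.lt_or_ge m n with h | h
  · have : (m:ℝ) + 1 ≤ n := by exact_mod_cast h
    linarith
  · have h' : n < m := lt_of_le_of_ne h (Ne.symm hne)
    have : (n:ℝ) + 1 ≤ m := by exact_mod_cast h'
    linarith

lemma nat_cast_no_gap {m n : ℕ} (h1 : 0 < (n:ℝ) - m) (h2 : (n:ℝ) - m < 1) : False := by
  have hmn : m < n := by exact_mod_cast (by linarith : (m:ℝ) < n)
  have : (m:ℝ) + 1 ≤ n := by exact_mod_cast hmn
  linarith

noncomputable def Fh (e : G.edgeSet) (x : ℝ) : ℝ :=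
  min ((x - lo (e : Sym2 α)) * ((kf G e : ℝ) * del G)⁻¹)
    (min (kf G e : ℝ) ((hi (e : Sym2 α) - x) * ((kf G e : ℝ) * del G)⁻¹))

lemma kdel_pos (e : G.edgeSet) : 0 < (kf G e : ℝ) * del G := by
  have : (0:ℝ) < kf G e := by exact_mod_cast kf_pos G e
  exact mul_pos this (del_pos G)

lemma Fh_nonneg (e : G.edgeSet) {x : ℝ} (h1 : lo (e : Sym2 α) ≤ x) (h2 : x ≤ hi (e : Sym2 α)) :
    0 ≤ Fh G e x := by
  have hk := kdel_pos G e
  have : (0:ℝ) ≤ kf G e := by positivity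
  unfold Fh
  have h1' : 0 ≤ (x - lo (e : Sym2 α)) * ((kf G e : ℝ) * del G)⁻¹ := by
    apply mul_nonneg (by linarith) (le_of_lt (inv_pos.2 hk))
  have h2' : 0 ≤ (hi (e : Sym2 α) - x) * ((kf G e : ℝ) * del G)⁻¹ := by
    apply mul_nonneg (by linarith) (le_of_lt (inv_pos.2 hk))
  exact le_min h1' (le_min this h2')

lemma Fh_lo (e : G.edgeSet) : Fh G e (lo (e : Sym2 α)) = 0 := by
  have hk := kdel_pos G e
  have h1 : (0:ℝ) ≤ kf G e := by positivity
  have h2 : 0 ≤ (hi (e : Sym2 α) - lo (e : Sym2 α)) * ((kf G e : ℝ) * del G)⁻¹ :=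
    mul_nonneg (by linarith [lo_lt_hi G e]) (le_of_lt (inv_pos.2 hk))
  unfold Fh
  rw [sub_self, zero_mul]
  exact min_eq_left (le_min h1 h2)

lemma Fh_hi (e : G.edgeSet) : Fh G e (hi (e : Sym2 α)) = 0 := by
  have hk := kdel_pos G e
  have h1 : (0:ℝ) ≤ kf G e := by positivity
  have h2 : 0 ≤ (hi (e : Sym2 α) - lo (e : Sym2 α)) * ((kf G e : ℝ) * del G)⁻¹ :=
    mul_nonneg (by linarith [lo_lt_hi G e]) (le_of_lt (inv_pos.2 hk))
  unfold Fh
  rw [sub_self, zero_mul]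
  have : min (kf G e : ℝ) (0:ℝ) = 0 := min_eq_right h1
  rw [this]
  exact min_eq_right (by exact h2)

lemma Fh_eq_zero (e : G.edgeSet) {x : ℝ} (h1 : lo (e : Sym2 α) ≤ x) (h2 : x ≤ hi (e : Sym2 α))
    (h : Fh G e x = 0) : x = lo (e : Sym2 α) ∨ x = hi (e : Sym2 α) := by
  have hk := inv_pos.2 (kdel_pos G e)
  have hke : (0:ℝ) < kf G e := by exact_mod_cast kf_pos G e
  unfold Fh at h
  rcases min_cases ((x - lo (e : Sym2 α)) * ((kf G e : ℝ) * del G)⁻¹)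
    (min (kf G e : ℝ) ((hi (e : Sym2 α) - x) * ((kf G e : ℝ) * del G)⁻¹)) with ⟨heq, _⟩ | ⟨heq, _⟩
  · rw [heq] at h
    left
    have : x - lo (e : Sym2 α) = 0 := by
      by_contra hne
      have : 0 < x - lo (e : Sym2 α) := lt_of_le_of_ne (by linarith) (Ne.symm hne)
      nlinarith
    linarith
  · rw [heq] at h
    rcases min_cases (kf G e : ℝ) ((hi (e : Sym2 α) - x) * ((kf G e : ℝ) * del G)⁻¹) with
      ⟨heq2, _⟩ | ⟨heq2, _⟩
    · rw [heq2] at h; linarith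
    · rw [heq2] at h
      right
      have : hi (e : Sym2 α) - x = 0 := by
        by_contra hne
        have : 0 < hi (e : Sym2 α) - x := lt_of_le_of_ne (by linarith) (Ne.symm hne)
        nlinarith
      linarith

/-- The three ways a point of positive height can lie on the curve of `e`. -/
lemma slant_cases (e : G.edgeSet) {x y : ℝ} (hy : y = Fh G e x) (hy0 : 0 < y) :
    (y = (kf G e : ℝ)) ∨
    (0 < x - lo (e : Sym2 α) ∧ x - lo (e : Sym2 α) ≤ (kf G e : ℝ) * kf G e * del G ∧
      x - lo (e : Sym2 α) = y * ((kf G e : ℝ) * del G)) ∨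
    (0 < hi (e : Sym2 α) - x ∧ hi (e : Sym2 α) - x ≤ (kf G e : ℝ) * kf G e * del G ∧
      hi (e : Sym2 α) - x = y * ((kf G e : ℝ) * del G)) := by
  have hk := kdel_pos G e
  have hyk : y ≤ (kf G e : ℝ) := by
    rw [hy]
    unfold Fh
    exact le_trans (min_le_right _ _) (min_le_left _ _)
  unfold Fh at hy
  rcases min_cases ((x - lo (e : Sym2 α)) * ((kf G e : ℝ) * del G)⁻¹)
    (min (kf G e : ℝ) ((hi (e : Sym2 α) - x) * ((kf G e : ℝ) * del G)⁻¹)) with ⟨heq, _⟩ | ⟨heq, _⟩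
  · right; left
    rw [heq] at hy
    have hx : x - lo (e : Sym2 α) = y * ((kf G e : ℝ) * del G) := by
      field_simp at hy ⊢
      rw [hy, mul_assoc, div_mul_cancel₀ _ (ne_of_gt hk)]
    refine ⟨by nlinarith, by nlinarith, hx⟩
  · rw [heq] at hy
    rcases min_cases (kf G e : ℝ) ((hi (e : Sym2 α) - x) * ((kf G e : ℝ) * del G)⁻¹) with
      ⟨heq2, _⟩ | ⟨heq2, _⟩
    · left; rw [hy, heq2]
    · right; right
      rw [heq2] at hy
      have hx : hi (e : Sym2 α) - x = y * ((kf G e : ℝ) * del G) := by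
        field_simp at hy ⊢
        rw [hy, mul_assoc, div_mul_cancel₀ _ (ne_of_gt hk)]
      refine ⟨by nlinarith, by nlinarith, hx⟩

lemma pairBB {e f : G.edgeSet} (hef : e ≠ f) {y : ℝ} (he : y = (kf G e : ℝ))
    (hf : y = (kf G f : ℝ)) : False := by
  apply hef
  apply kf_inj
  exact_mod_cast he ▸ hf

lemma pairAA {e f : G.edgeSet} (hef : e ≠ f) {x y : ℝ} (hy0 : 0 < y)
    (he : 0 < x - lo (e : Sym2 α) ∧ x - lo (e : Sym2 α) ≤ (kf G e : ℝ) * kf G e * del G ∧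
      x - lo (e : Sym2 α) = y * ((kf G e : ℝ) * del G))
    (hf : 0 < x - lo (f : Sym2 α) ∧ x - lo (f : Sym2 α) ≤ (kf G f : ℝ) * kf G f * del G ∧
      x - lo (f : Sym2 α) = y * ((kf G f : ℝ) * del G)) : False := by
  obtain ⟨m, hm⟩ := lo_nat G e
  obtain ⟨n, hn⟩ := lo_nat G f
  have h1 := kk_del_lt G e e
  have h2 := kk_del_lt G f f
  have hmn : m = n := by
    apply nat_cast_eq_of_abs_lt (m := m) (n := n) <;> rw [← hm, ← hn] <;>
      [skip; skip] <;> nlinarith [he.1, he.2.1, hf.1, hf.2.1]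
  have hlo : lo (e : Sym2 α) = lo (f : Sym2 α) := by rw [hm, hn, hmn]
  have : y * ((kf G e : ℝ) * del G) = y * ((kf G f : ℝ) * del G) := by
    rw [← he.2.2, ← hf.2.2, hlo]
  have hk : (kf G e : ℝ) = kf G f := by
    have h2' := mul_left_cancel₀ (ne_of_gt hy0) this
    exact mul_right_cancel₀ (ne_of_gt (del_pos G)) h2'
  exact pairBB G hef rfl hk

lemma pairCC {e f : G.edgeSet} (hef : e ≠ f) {x y : ℝ} (hy0 : 0 < y)
    (he : 0 < hi (e : Sym2 α) - x ∧ hi (e : Sym2 α) - x ≤ (kf G e : ℝ) * kf G e * del G ∧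
      hi (e : Sym2 α) - x = y * ((kf G e : ℝ) * del G))
    (hf : 0 < hi (f : Sym2 α) - x ∧ hi (f : Sym2 α) - x ≤ (kf G f : ℝ) * kf G f * del G ∧
      hi (f : Sym2 α) - x = y * ((kf G f : ℝ) * del G)) : False := by
  obtain ⟨m, hm⟩ := hi_nat G e
  obtain ⟨n, hn⟩ := hi_nat G f
  have h1 := kk_del_lt G e e
  have h2 := kk_del_lt G f f
  have hmn : m = n := by
    apply nat_cast_eq_of_abs_lt (m := m) (n := n) <;> rw [← hm, ← hn] <;>
      [skip; skip] <;> nlinarith [he.1, he.2.1, hf.1, hf.2.1]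
  have hhi : hi (e : Sym2 α) = hi (f : Sym2 α) := by rw [hm, hn, hmn]
  have : y * ((kf G e : ℝ) * del G) = y * ((kf G f : ℝ) * del G) := by
    rw [← he.2.2, ← hf.2.2, hhi]
  have hk : (kf G e : ℝ) = kf G f := by
    have h2' := mul_left_cancel₀ (ne_of_gt hy0) this
    exact mul_right_cancel₀ (ne_of_gt (del_pos G)) h2'
  exact pairBB G hef rfl hk

lemma pairAC {e f : G.edgeSet} {x y : ℝ}
    (he : 0 < x - lo (e : Sym2 α) ∧ x - lo (e : Sym2 α) ≤ (kf G e : ℝ) * kf G e * del G ∧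
      x - lo (e : Sym2 α) = y * ((kf G e : ℝ) * del G))
    (hf : 0 < hi (f : Sym2 α) - x ∧ hi (f : Sym2 α) - x ≤ (kf G f : ℝ) * kf G f * del G ∧
      hi (f : Sym2 α) - x = y * ((kf G f : ℝ) * del G)) : False := by
  obtain ⟨m, hm⟩ := lo_nat G e
  obtain ⟨n, hn⟩ := hi_nat G f
  have h1 := kk_del_lt G e e
  have h2 := kk_del_lt G f f
  refine nat_cast_no_gap (m := m) (n := n) ?_ ?_ <;> rw [← hm, ← hn] <;>
    nlinarith [he.1, he.2.1, hf.1, hf.2.1]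

noncomputable def xmap (e : G.edgeSet) (t : unitInterval) : ℝ :=
  lo (e : Sym2 α) + t.1 * (hi (e : Sym2 α) - lo (e : Sym2 α))

lemma xmap_mem (e : G.edgeSet) (t : unitInterval) :
    lo (e : Sym2 α) ≤ xmap G e t ∧ xmap G e t ≤ hi (e : Sym2 α) := by
  have h := lo_lt_hi G e
  have h1 := t.2.1
  have h2 := t.2.2
  unfold xmap
  constructor <;> nlinarith

noncomputable def curve (e : G.edgeSet) : C(unitInterval, ℝ × ℝ) :=
  ⟨fun t => (xmap G e t, Fh G e (xmap G e t)), by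
    have hxc : Continuous (fun t : unitInterval => xmap G e t) := by
      unfold xmap
      fun_prop
    have hFc : Continuous (Fh G e) := by
      unfold Fh
      fun_prop
    exact hxc.prodMk (hFc.comp hxc)⟩

lemma on_curve {e : G.edgeSet} {p : ℝ × ℝ} (h : p ∈ Set.range (curve G e)) :
    ∃ x : ℝ, lo (e : Sym2 α) ≤ x ∧ x ≤ hi (e : Sym2 α) ∧ p = (x, Fh G e x) := by
  obtain ⟨t, ht⟩ := h
  exact ⟨xmap G e t, (xmap_mem G e t).1, (xmap_mem G e t).2, ht ▸ rfl⟩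

lemma curve_zero (e : G.edgeSet) : curve G e 0 = (lo (e : Sym2 α), 0) := by
  have : xmap G e 0 = lo (e : Sym2 α) := by simp [xmap]
  simp only [curve, ContinuousMap.coe_mk, this, Fh_lo]

lemma curve_one (e : G.edgeSet) : curve G e 1 = (hi (e : Sym2 α), 0) := by
  have : xmap G e 1 = hi (e : Sym2 α) := by simp [xmap]
  simp only [curve, ContinuousMap.coe_mk, this, Fh_hi]

/-- The explicit drawing of `G` with finitely many crossings. -/
noncomputable def drawing0 : Drawing G where
  vmap v := (pos v, 0)
  vmap_inj := by
    intro a b h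
    exact pos_inj (congrArg Prod.fst h)
  emap := curve G
  emap_inj := by
    intro e t t' h
    have h1 : xmap G e t = xmap G e t' := congrArg Prod.fst h
    have h2 := lo_lt_hi G e
    unfold xmap at h1
    have : t.1 = t'.1 := by
      have : t.1 * (hi (e : Sym2 α) - lo (e : Sym2 α)) =
          t'.1 * (hi (e : Sym2 α) - lo (e : Sym2 α)) := by linarith
      exact mul_right_cancel₀ (by linarith) this
    exact Subtype.ext this
  endpoints := by
    intro e
    obtain ⟨a, b, hab, he, ha, hb⟩ := edge_rep G e
    exact ⟨a, b, he, by rw [curve_zero, ← ha], by rw [curve_one, ← hb]⟩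
  vertex_hit := by
    intro e w hw
    obtain ⟨x, h1, h2, h3⟩ := on_curve G hw
    have hx : pos w = x := congrArg Prod.fst h3
    have hy : (0:ℝ) = Fh G e x := congrArg Prod.snd h3
    obtain ⟨a, b, hab, he, ha, hb⟩ := edge_rep G e
    rcases Fh_eq_zero G e h1 h2 hy.symm with h | h
    · have : w = a := pos_inj (by rw [hx, h, ha])
      rw [he, this]
      exact Sym2.mem_mk_left a b
    · have : w = b := pos_inj (by rw [hx, h, hb])
      rw [he, this]
      exact Sym2.mem_mk_right a b
  no_triple := by
    intro e f g p hef heg hfg hpe hpf hpg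
    obtain ⟨x1, he1, he2, he3⟩ := on_curve G hpe
    obtain ⟨x2, hf1, hf2, hf3⟩ := on_curve G hpf
    obtain ⟨x3, hg1, hg2, hg3⟩ := on_curve G hpg
    have hx12 : x1 = x2 := by rw [he3] at hf3; exact (congrArg Prod.fst hf3)
    have hx13 : x1 = x3 := by rw [he3] at hg3; exact (congrArg Prod.fst hg3)
    subst hx12 hx13
    have hye : p.2 = Fh G e x1 := congrArg Prod.snd he3
    have hyf : p.2 = Fh G f x1 := congrArg Prod.snd hf3
    have hyg : p.2 = Fh G g x1 := congrArg Prod.snd hg3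
    rcases lt_or_ge 0 p.2 with hy0 | hy0
    · exfalso
      rcases slant_cases G e hye hy0 with he' | he' | he' <;>
        rcases slant_cases G f hyf hy0 with hf' | hf' | hf' <;>
          rcases slant_cases G g hyg hy0 with hg' | hg' | hg' <;>
            first
              | exact pairBB G hef he' hf'
              | exact pairBB G heg he' hg'
              | exact pairBB G hfg hf' hg'
              | exact pairAA G hef hy0 he' hf'
              | exact pairAA G heg hy0 he' hg'
              | exact pairAA G hfg hy0 hf' hg'
              | exact pairCC G hef hy0 he' hf'
              | exact pairCC G heg hy0 he' hg'
              | exact pairCC G hfg hy0 hf' hg'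
              | exact pairAC G he' hf'
              | exact pairAC G he' hg'
              | exact pairAC G hf' hg'
              | exact pairAC G hf' he'
              | exact pairAC G hg' he'
              | exact pairAC G hg' hf'
    · have hy : p.2 = 0 :=
        le_antisymm hy0 (hye ▸ Fh_nonneg G e he1 he2)
      have hze : Fh G e x1 = 0 := hye ▸ hy
      have hzf : Fh G f x1 = 0 := hyf ▸ hy
      have hzg : Fh G g x1 = 0 := hyg ▸ hy
      have key : ∀ e' : G.edgeSet, Fh G e' x1 = 0 → lo (e' : Sym2 α) ≤ x1 →
          x1 ≤ hi (e' : Sym2 α) → ∃ w : α, pos w = x1 ∧ w ∈ (e' : Sym2 α) := by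
        intro e' hz h1 h2
        obtain ⟨a, b, hab, he', ha, hb⟩ := edge_rep G e'
        rcases Fh_eq_zero G e' h1 h2 hz with h | h
        · exact ⟨a, by rw [ha, h], by rw [he']; exact Sym2.mem_mk_left a b⟩
        · exact ⟨b, by rw [hb, h], by rw [he']; exact Sym2.mem_mk_right a b⟩
      obtain ⟨we, hwe1, hwe2⟩ := key e hze he1 he2
      obtain ⟨wf, hwf1, hwf2⟩ := key f hzf hf1 hf2
      obtain ⟨wg, hwg1, hwg2⟩ := key g hzg hg1 hg2
      have hef' : we = wf := pos_inj (by rw [hwe1, hwf1])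
      have heg' : we = wg := pos_inj (by rw [hwe1, hwg1])
      refine ⟨we, ?_, hwe2, hef' ▸ hwf2, heg' ▸ hwg2⟩
      have : p = (x1, p.2) := by rw [he3]
      rw [this, hy, ← hwe1]

lemma crossings_finite : (drawing0 G).crossings.Finite := by
  classical
  set A : Set (ℝ × ℝ) := ⋃ (e : G.edgeSet) (f : G.edgeSet),
    ({(lo (e : Sym2 α) + (kf G f : ℝ) * ((kf G e : ℝ) * del G), (kf G f : ℝ)),
      (hi (e : Sym2 α) - (kf G f : ℝ) * ((kf G e : ℝ) * del G), (kf G f : ℝ)),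
      (lo (f : Sym2 α) + (kf G e : ℝ) * ((kf G f : ℝ) * del G), (kf G e : ℝ)),
      (hi (f : Sym2 α) - (kf G e : ℝ) * ((kf G f : ℝ) * del G), (kf G e : ℝ))} :
      Set (ℝ × ℝ)) with hA
  have hAfin : A.Finite := by
    apply Set.finite_iUnion
    intro e
    apply Set.finite_iUnion
    intro f
    exact (Set.finite_singleton _).insert _ |>.insert _ |>.insert _
  have hfin : (A ×ˢ (Set.univ : Set (Sym2 G.edgeSet))).Finite :=
    hAfin.prod Set.finite_univ
  apply hfin.subset
  rintro ⟨p, q⟩ hx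
  obtain ⟨e, f, hq, hef, hpe, hpf, hnw⟩ := hx
  simp only [Set.mem_prod, Set.mem_univ, and_true]
  obtain ⟨x1, he1, he2, he3⟩ := on_curve G hpe
  obtain ⟨x2, hf1, hf2, hf3⟩ := on_curve G hpf
  have hx12 : x1 = x2 := by rw [he3] at hf3; exact (congrArg Prod.fst hf3)
  subst hx12
  have hye : p.2 = Fh G e x1 := congrArg Prod.snd he3
  have hyf : p.2 = Fh G f x1 := congrArg Prod.snd hf3
  have hy0 : 0 < p.2 := by
    rcases lt_or_ge 0 p.2 with h | h
    · exact h
    · exfalso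
      have hy : p.2 = 0 := le_antisymm h (hye ▸ Fh_nonneg G e he1 he2)
      have key : ∀ e' : G.edgeSet, Fh G e' x1 = 0 → lo (e' : Sym2 α) ≤ x1 →
          x1 ≤ hi (e' : Sym2 α) → ∃ w : α, pos w = x1 ∧ w ∈ (e' : Sym2 α) := by
        intro e' hz h1 h2
        obtain ⟨a, b, hab, he', ha, hb⟩ := edge_rep G e'
        rcases Fh_eq_zero G e' h1 h2 hz with h' | h'
        · exact ⟨a, by rw [ha, h'], by rw [he']; exact Sym2.mem_mk_left a b⟩
        · exact ⟨b, by rw [hb, h'], by rw [he']; exact Sym2.mem_mk_right a b⟩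
      obtain ⟨we, hwe1, hwe2⟩ := key e (hye ▸ hy) he1 he2
      obtain ⟨wf, hwf1, hwf2⟩ := key f (hyf ▸ hy) hf1 hf2
      have hwef : we = wf := pos_inj (by rw [hwe1, hwf1])
      apply hnw
      refine ⟨we, ?_, hwe2, hwef ▸ hwf2⟩
      show ((pos we, 0) : ℝ × ℝ) = p
      have h3 : p = (x1, Fh G e x1) := he3
      rw [h3, Prod.mk.injEq]
      exact ⟨hwe1, by rw [← hye, hy]⟩
  have hpx : p = (x1, p.2) := by
    have h3 : p = (x1, Fh G e x1) := he3
    rw [h3]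
  show p ∈ A
  rw [hA]
  apply Set.mem_iUnion.2
  refine ⟨e, Set.mem_iUnion.2 ⟨f, ?_⟩⟩
  rcases slant_cases G e hye hy0 with he' | he' | he' <;>
    rcases slant_cases G f hyf hy0 with hf' | hf' | hf'
  · exact (pairBB G hef he' hf').elim
  · -- e plateau, f up: p = q3
    have hx := hf'.2.2
    rw [he'] at hx
    have hp : p = (lo (f : Sym2 α) + (kf G e : ℝ) * ((kf G f : ℝ) * del G), (kf G e : ℝ)) := by
      rw [hpx, Prod.mk.injEq]
      exact ⟨by linarith, he'⟩
    rw [hp]; simp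
  · -- e plateau, f down: p = q4
    have hx := hf'.2.2
    rw [he'] at hx
    have hp : p = (hi (f : Sym2 α) - (kf G e : ℝ) * ((kf G f : ℝ) * del G), (kf G e : ℝ)) := by
      rw [hpx, Prod.mk.injEq]
      exact ⟨by linarith, he'⟩
    rw [hp]; simp
  · -- e up, f plateau: p = q1
    have hx := he'.2.2
    rw [hf'] at hx
    have hp : p = (lo (e : Sym2 α) + (kf G f : ℝ) * ((kf G e : ℝ) * del G), (kf G f : ℝ)) := by
      rw [hpx, Prod.mk.injEq]
      exact ⟨by linarith, hf'⟩
    rw [hp]; simp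
  · exact (pairAA G hef hy0 he' hf').elim
  · exact (pairAC G he' hf').elim
  · -- e down, f plateau: p = q2
    have hx := he'.2.2
    rw [hf'] at hx
    have hp : p = (hi (e : Sym2 α) - (kf G f : ℝ) * ((kf G e : ℝ) * del G), (kf G f : ℝ)) := by
      rw [hpx, Prod.mk.injEq]
      exact ⟨by linarith, hf'⟩
    rw [hp]; simp
  · exact (pairAC G hf' he').elim
  · exact (pairCC G hef hy0 he' hf').elim

lemma crossingNumber_ne_top : crossingNumber G ≠ ⊤ := by
  have h1 : (drawing0 G).numCrossings ≠ ⊤ := by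
    unfold Drawing.numCrossings
    rw [Set.encard_ne_top_iff]
    exact crossings_finite G
  intro h
  have := iInf_le (fun d : Drawing G => d.numCrossings) (drawing0 G)
  rw [crossingNumber] at h
  rw [h] at this
  exact h1 (top_le_iff.1 this)

end CrossAux

namespace CrossAux

section Surgery

variable {α : Type} {G : SimpleGraph α} (d : Drawing G)

lemma cross_spec (c : ↥d.crossings) : ∃ e f : G.edgeSet, (c : (ℝ × ℝ) × Sym2 G.edgeSet).2 = s(e, f) ∧
    e ≠ f ∧ (c : (ℝ × ℝ) × Sym2 G.edgeSet).1 ∈ Set.range (d.emap e) ∧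
    (c : (ℝ × ℝ) × Sym2 G.edgeSet).1 ∈ Set.range (d.emap f) ∧
    ¬ ∃ w : α, d.vmap w = (c : (ℝ × ℝ) × Sym2 G.edgeSet).1 ∧ w ∈ (e : Sym2 α) ∧ w ∈ (f : Sym2 α) :=
  c.2

lemma mem_range_of_mem_pair {c : ↥d.crossings} {e : G.edgeSet}
    (he : e ∈ (c : (ℝ × ℝ) × Sym2 G.edgeSet).2) :
    (c : (ℝ × ℝ) × Sym2 G.edgeSet).1 ∈ Set.range (d.emap e) := by
  obtain ⟨e₀, f₀, hq, hne, h1, h2, h3⟩ := cross_spec d c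
  rw [hq] at he
  rcases Sym2.mem_iff.1 he with rfl | rfl
  · exact h1
  · exact h2

lemma vertex_ne_cross (v : α) (c : ↥d.crossings) :
    d.vmap v ≠ (c : (ℝ × ℝ) × Sym2 G.edgeSet).1 := by
  intro h
  obtain ⟨e₀, f₀, hq, hne, h1, h2, h3⟩ := cross_spec d c
  exact h3 ⟨v, h, d.vertex_hit e₀ v (h ▸ h1), d.vertex_hit f₀ v (h ▸ h2)⟩

lemma no_common_of_mem_pair {c : ↥d.crossings} {e f : G.edgeSet}
    (he : e ∈ (c : (ℝ × ℝ) × Sym2 G.edgeSet).2) (hf : f ∈ (c : (ℝ × ℝ) × Sym2 G.edgeSet).2)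
    (hef : e ≠ f) :
    ¬ ∃ w : α, d.vmap w = (c : (ℝ × ℝ) × Sym2 G.edgeSet).1 ∧ w ∈ (e : Sym2 α) ∧ w ∈ (f : Sym2 α) := by
  obtain ⟨e₀, f₀, hq, hne, h1, h2, h3⟩ := cross_spec d c
  rw [hq] at he hf
  rcases Sym2.mem_iff.1 he with rfl | rfl <;> rcases Sym2.mem_iff.1 hf with rfl | rfl
  · exact absurd rfl hef
  · exact h3
  · intro ⟨w, hw1, hw2, hw3⟩
    exact h3 ⟨w, hw1, hw3, hw2⟩
  · exact absurd rfl hef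

/-- If the point of a crossing lies on the curve of `e`, then `e` is one of its two edges. -/
lemma mem_pair_of_mem_range {c : ↥d.crossings} {e : G.edgeSet}
    (h : (c : (ℝ × ℝ) × Sym2 G.edgeSet).1 ∈ Set.range (d.emap e)) :
    e ∈ (c : (ℝ × ℝ) × Sym2 G.edgeSet).2 := by
  obtain ⟨e₀, f₀, hq, hne, h1, h2, h3⟩ := cross_spec d c
  rw [hq]
  rw [Sym2.mem_iff]
  by_contra hcon
  push_neg at hcon
  obtain ⟨w, hw1, hw2, hw3, _⟩ := d.no_triple e₀ f₀ e _ hne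
    (fun hh => hcon.1 hh.symm) (fun hh => hcon.2 hh.symm) h1 h2 h
  exact h3 ⟨w, hw1, hw2, hw3⟩

lemma cross_point_inj {c c' : ↥d.crossings}
    (h : (c : (ℝ × ℝ) × Sym2 G.edgeSet).1 = (c' : (ℝ × ℝ) × Sym2 G.edgeSet).1) : c = c' := by
  obtain ⟨e₀, f₀, hq, hne, h1, h2, h3⟩ := cross_spec d c
  obtain ⟨e₁, f₁, hq', hne', h1', h2', h3'⟩ := cross_spec d c'
  have he₁ : e₁ ∈ (c : (ℝ × ℝ) × Sym2 G.edgeSet).2 := mem_pair_of_mem_range d (h ▸ h1')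
  have hf₁ : f₁ ∈ (c : (ℝ × ℝ) × Sym2 G.edgeSet).2 := mem_pair_of_mem_range d (h ▸ h2')
  have hqq : (c : (ℝ × ℝ) × Sym2 G.edgeSet).2 = (c' : (ℝ × ℝ) × Sym2 G.edgeSet).2 := by
    rw [hq] at he₁ hf₁ ⊢
    rw [hq']
    rcases Sym2.mem_iff.1 he₁ with rfl | rfl <;> rcases Sym2.mem_iff.1 hf₁ with rfl | rfl
    · exact absurd rfl hne'
    · rfl
    · exact Sym2.eq_swap
    · exact absurd rfl hne'
  exact Subtype.ext (Prod.ext h hqq)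

/-- Vertices of the planarization: original vertices plus crossings. -/
def Bt : Type := α ⊕ ↥d.crossings

/-- Position of a planarization vertex in the plane. -/
noncomputable def vmapβ : Bt d → ℝ × ℝ :=
  Sum.elim d.vmap (fun c => (c : (ℝ × ℝ) × Sym2 G.edgeSet).1)

lemma vmapβ_inj : Function.Injective (vmapβ d) := by
  rintro (v | c) (v' | c') h
  · exact congrArg Sum.inl (d.vmap_inj h)
  · exact absurd h (vertex_ne_cross d v c')
  · exact absurd h.symm (vertex_ne_cross d v' c)
  · exact congrArg Sum.inr (cross_point_inj d h)

/-- The parameter at which the curve of `e` passes through the crossing `c`. -/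
noncomputable def par (e : G.edgeSet) (c : ↥d.crossings) : unitInterval :=
  if h : ∃ t, d.emap e t = (c : (ℝ × ℝ) × Sym2 G.edgeSet).1 then h.choose else 0

lemma par_spec {e : G.edgeSet} {c : ↥d.crossings}
    (he : e ∈ (c : (ℝ × ℝ) × Sym2 G.edgeSet).2) :
    d.emap e (par d e c) = (c : (ℝ × ℝ) × Sym2 G.edgeSet).1 := by
  obtain ⟨t, ht⟩ := mem_range_of_mem_pair d he
  rw [par, dif_pos ⟨t, ht⟩]
  exact (Exists.choose_spec (⟨t, ht⟩ : ∃ t, d.emap e t = _))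

lemma par_eq {e : G.edgeSet} {c : ↥d.crossings} {t : unitInterval}
    (h : d.emap e t = (c : (ℝ × ℝ) × Sym2 G.edgeSet).1) : t = par d e c := by
  apply d.emap_inj e
  rw [h, par, dif_pos ⟨t, h⟩]
  exact (Exists.choose_spec (⟨t, h⟩ : ∃ t, d.emap e t = _)).symm

variable (hfin : d.crossings.Finite)

/-- The set of parameters cutting the curve of `e` into sub-arcs. -/
noncomputable def Pset (e : G.edgeSet) : Finset unitInterval :=
  letI := hfin.fintype
  insert 0 (insert 1
    ((Finset.univ.filter (fun c : ↥d.crossings => e ∈ (c : (ℝ × ℝ) × Sym2 G.edgeSet).2)).image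
      (par d e)))

lemma zero_mem_Pset (e : G.edgeSet) : 0 ∈ Pset d hfin e := by
  rw [Pset]; exact Finset.mem_insert_self _ _

lemma one_mem_Pset (e : G.edgeSet) : 1 ∈ Pset d hfin e := by
  rw [Pset]; exact Finset.mem_insert_of_mem (Finset.mem_insert_self _ _)

lemma par_mem_Pset {e : G.edgeSet} {c : ↥d.crossings}
    (he : e ∈ (c : (ℝ × ℝ) × Sym2 G.edgeSet).2) : par d e c ∈ Pset d hfin e := by
  letI := hfin.fintype
  rw [Pset]
  refine Finset.mem_insert_of_mem (Finset.mem_insert_of_mem ?_)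
  exact Finset.mem_image.2 ⟨c, Finset.mem_filter.2 ⟨Finset.mem_univ _, he⟩, rfl⟩

lemma mem_Pset_iff {e : G.edgeSet} {t : unitInterval} :
    t ∈ Pset d hfin e ↔ t = 0 ∨ t = 1 ∨
      ∃ c : ↥d.crossings, e ∈ (c : (ℝ × ℝ) × Sym2 G.edgeSet).2 ∧ par d e c = t := by
  letI := hfin.fintype
  rw [Pset]
  simp only [Finset.mem_insert, Finset.mem_image, Finset.mem_filter, Finset.mem_univ,
    true_and] <;> tauto

/-- `b` is the planarization vertex sitting at parameter `t` on the curve of `e`. -/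
def nodeRel (e : G.edgeSet) (t : unitInterval) (b : Bt d) : Prop :=
  (∃ v : α, b = Sum.inl v ∧ d.vmap v = d.emap e t) ∨
  (∃ c : ↥d.crossings, b = Sum.inr c ∧ e ∈ (c : (ℝ × ℝ) × Sym2 G.edgeSet).2 ∧
    (c : (ℝ × ℝ) × Sym2 G.edgeSet).1 = d.emap e t)

lemma nodeRel_point {e : G.edgeSet} {t : unitInterval} {b : Bt d} (h : nodeRel d e t b) :
    vmapβ d b = d.emap e t := by
  rcases h with ⟨v, rfl, hv⟩ | ⟨c, rfl, _, hc⟩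
  · exact hv
  · exact hc

lemma nodeRel_unique {e f : G.edgeSet} {t u : unitInterval} {b b' : Bt d}
    (h : nodeRel d e t b) (h' : nodeRel d f u b') (hpt : d.emap e t = d.emap f u) : b = b' :=
  vmapβ_inj d ((nodeRel_point d h).trans (hpt.trans (nodeRel_point d h').symm))

lemma nodeRel_exists {e : G.edgeSet} {t : unitInterval} (ht : t ∈ Pset d hfin e) :
    ∃ b : Bt d, nodeRel d e t b := by
  rcases (mem_Pset_iff d hfin).1 ht with rfl | rfl | ⟨c, hc, rfl⟩
  · obtain ⟨u, v, _, h0, _⟩ := d.endpoints e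
    exact ⟨Sum.inl u, Or.inl ⟨u, rfl, h0.symm⟩⟩
  · obtain ⟨u, v, _, _, h1⟩ := d.endpoints e
    exact ⟨Sum.inl v, Or.inl ⟨v, rfl, h1.symm⟩⟩
  · exact ⟨Sum.inr c, Or.inr ⟨c, rfl, hc, (par_spec d hc).symm⟩⟩

lemma nodeRel_param {e : G.edgeSet} {t : unitInterval} {b : Bt d} (h : nodeRel d e t b) :
    t ∈ Pset d hfin e := by
  rcases h with ⟨v, rfl, hv⟩ | ⟨c, rfl, hc, hpt⟩
  · have hve : v ∈ (e : Sym2 α) := d.vertex_hit e v ⟨t, hv.symm⟩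
    obtain ⟨x, y, hxy, h0, h1⟩ := d.endpoints e
    rw [hxy, Sym2.mem_iff] at hve
    rcases hve with rfl | rfl
    · have : t = 0 := d.emap_inj e (by rw [← hv, h0])
      exact this ▸ zero_mem_Pset d hfin e
    · have : t = 1 := d.emap_inj e (by rw [← hv, h1])
      exact this ▸ one_mem_Pset d hfin e
  · have : t = par d e c := par_eq d hpt.symm
    exact this ▸ par_mem_Pset d hfin hc

/-- Adjacency relation of the planarization: consecutive nodes along some edge curve. -/
def Hrel (b b' : Bt d) : Prop :=
  ∃ (e : G.edgeSet) (t u : unitInterval), t < u ∧ t ∈ Pset d hfin e ∧ u ∈ Pset d hfin e ∧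
    (∀ s ∈ Pset d hfin e, ¬(t < s ∧ s < u)) ∧ nodeRel d e t b ∧ nodeRel d e u b'

/-- The planarization graph. -/
noncomputable def Hgraph : SimpleGraph (Bt d) := SimpleGraph.fromRel (Hrel d hfin)

/-- A sub-arc datum for an edge of the planarization. -/
structure Arc (E : Sym2 (Bt d)) where
  b : Bt d
  c : Bt d
  e : G.edgeSet
  t : unitInterval
  u : unitInterval
  hE : E = s(b, c)
  htu : t < u
  ht : t ∈ Pset d hfin e
  hu : u ∈ Pset d hfin e
  hbet : ∀ s ∈ Pset d hfin e, ¬(t < s ∧ s < u)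
  hb : nodeRel d e t b
  hc : nodeRel d e u c

lemma arc_exists (E : (Hgraph d hfin).edgeSet) : Nonempty (Arc d hfin (E : Sym2 (Bt d))) := by
  obtain ⟨q, hq⟩ := E
  induction q using Sym2.ind with
  | _ x y =>
    rw [SimpleGraph.mem_edgeSet, Hgraph, SimpleGraph.fromRel_adj] at hq
    obtain ⟨hne, h | h⟩ := hq
    · obtain ⟨e, t, u, h1, h2, h3, h4, h5, h6⟩ := h
      exact ⟨⟨x, y, e, t, u, rfl, h1, h2, h3, h4, h5, h6⟩⟩
    · obtain ⟨e, t, u, h1, h2, h3, h4, h5, h6⟩ := h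
      exact ⟨⟨y, x, e, t, u, Sym2.eq_swap, h1, h2, h3, h4, h5, h6⟩⟩

noncomputable def arc (E : (Hgraph d hfin).edgeSet) : Arc d hfin (E : Sym2 (Bt d)) :=
  (arc_exists d hfin E).some

/-- The sub-arc of the curve of `e` between parameters `t` and `u`. -/
noncomputable def subArc (e : G.edgeSet) (t u : unitInterval) (h : (t : ℝ) ≤ u) :
    C(unitInterval, ℝ × ℝ) :=
  ⟨fun s => d.emap e ⟨t.1 + s.1 * (u.1 - t.1), by
      have h1 := t.2.1
      have h4 := u.2.2
      have h5 := s.2.1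
      have h6 := s.2.2
      have h7 : (0:ℝ) ≤ u.1 - t.1 := sub_nonneg.2 h
      constructor
      · nlinarith
      · nlinarith⟩, by
    have h1 : Continuous fun s : unitInterval => t.1 + s.1 * (u.1 - t.1) := by fun_prop
    exact (d.emap e).continuous.comp (h1.subtype_mk _)⟩

lemma subArc_range {e : G.edgeSet} {t u : unitInterval} {h : (t : ℝ) ≤ u} {p : ℝ × ℝ}
    (hp : p ∈ Set.range (subArc d e t u h)) :
    ∃ r : unitInterval, t ≤ r ∧ r ≤ u ∧ d.emap e r = p := by
  obtain ⟨s, hs⟩ := hp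
  have h5 := s.2.1
  have h6 := s.2.2
  have h7 : (0:ℝ) ≤ u.1 - t.1 := sub_nonneg.2 h
  refine ⟨_, ?_, ?_, hs⟩
  · rw [← Subtype.coe_le_coe]
    show (t:ℝ) ≤ t.1 + s.1 * (u.1 - t.1)
    nlinarith
  · rw [← Subtype.coe_le_coe]
    show t.1 + s.1 * (u.1 - t.1) ≤ (u:ℝ)
    nlinarith

lemma subArc_zero {e : G.edgeSet} {t u : unitInterval} {h : (t : ℝ) ≤ u} :
    subArc d e t u h 0 = d.emap e t := by
  show d.emap e _ = d.emap e t
  congr 1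
  apply Subtype.ext
  show t.1 + (0:ℝ) * (u.1 - t.1) = t.1
  ring

lemma subArc_one {e : G.edgeSet} {t u : unitInterval} {h : (t : ℝ) ≤ u} :
    subArc d e t u h 1 = d.emap e u := by
  show d.emap e _ = d.emap e u
  congr 1
  apply Subtype.ext
  show t.1 + (1:ℝ) * (u.1 - t.1) = u.1
  ring

lemma subArc_inj {e : G.edgeSet} {t u : unitInterval} {h : (t : ℝ) ≤ u} (h' : (t : ℝ) < u) :
    Function.Injective (subArc d e t u h) := by
  intro s s' hss
  have := d.emap_inj e hss
  have h2 : t.1 + s.1 * (u.1 - t.1) = t.1 + s'.1 * (u.1 - t.1) := congrArg Subtype.val this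
  apply Subtype.ext
  have h3 : s.1 * (u.1 - t.1) = s'.1 * (u.1 - t.1) := by linarith
  exact mul_right_cancel₀ (by linarith) h3

noncomputable def arcCurve (E : (Hgraph d hfin).edgeSet) : C(unitInterval, ℝ × ℝ) :=
  subArc d (arc d hfin E).e (arc d hfin E).t (arc d hfin E).u
    (le_of_lt (Subtype.coe_lt_coe.2 (arc d hfin E).htu))

lemma arc_endpoint {E : (Hgraph d hfin).edgeSet} {r : unitInterval}
    (hr : r ∈ Pset d hfin (arc d hfin E).e)
    (h1 : (arc d hfin E).t ≤ r) (h2 : r ≤ (arc d hfin E).u) :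
    r = (arc d hfin E).t ∨ r = (arc d hfin E).u := by
  rcases eq_or_lt_of_le h1 with h | h
  · exact Or.inl h.symm
  · rcases eq_or_lt_of_le h2 with h' | h'
    · exact Or.inr h'
    · exact absurd ⟨h, h'⟩ ((arc d hfin E).hbet r hr)

lemma node_in_edge {E : (Hgraph d hfin).edgeSet} {r : unitInterval} {b : Bt d}
    (hrel : nodeRel d (arc d hfin E).e r b)
    (h1 : (arc d hfin E).t ≤ r) (h2 : r ≤ (arc d hfin E).u) : b ∈ (E : Sym2 (Bt d)) := by
  have hr := nodeRel_param d hfin hrel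
  rcases arc_endpoint d hfin hr h1 h2 with h | h
  · have : b = (arc d hfin E).b :=
      nodeRel_unique d hrel (arc d hfin E).hb (by rw [h])
    rw [(arc d hfin E).hE, this]
    exact Sym2.mem_mk_left _ _
  · have : b = (arc d hfin E).c :=
      nodeRel_unique d hrel (arc d hfin E).hc (by rw [h])
    rw [(arc d hfin E).hE, this]
    exact Sym2.mem_mk_right _ _

lemma arcs_meet {E F : (Hgraph d hfin).edgeSet} (hEF : E ≠ F) {p : ℝ × ℝ}
    (hpE : p ∈ Set.range (arcCurve d hfin E)) (hpF : p ∈ Set.range (arcCurve d hfin F)) :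
    ∃ w : Bt d, vmapβ d w = p ∧ w ∈ (E : Sym2 (Bt d)) ∧ w ∈ (F : Sym2 (Bt d)) := by
  obtain ⟨r, hr1, hr2, hre⟩ := subArc_range d hpE
  obtain ⟨r', hr1', hr2', hre'⟩ := subArc_range d hpF
  by_cases hee : (arc d hfin F).e = (arc d hfin E).e
  · -- same underlying edge of G
    rw [hee] at hre'
    have hrr : r = r' := d.emap_inj _ (hre.trans hre'.symm)
    subst hrr
    by_cases hrP : r ∈ Pset d hfin (arc d hfin E).e
    · obtain ⟨w, hw⟩ := nodeRel_exists d hfin hrP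
      refine ⟨w, (nodeRel_point d hw).trans hre, node_in_edge d hfin hw hr1 hr2, ?_⟩
      have hw' : nodeRel d (arc d hfin F).e r w := by rw [hee]; exact hw
      exact node_in_edge d hfin hw' hr1' hr2'
    · exfalso
      have htE : (arc d hfin E).t < r :=
        lt_of_le_of_ne hr1 (fun h => hrP (h ▸ (arc d hfin E).ht))
      have huE : r < (arc d hfin E).u :=
        lt_of_le_of_ne hr2 (fun h => hrP (h.symm ▸ (arc d hfin E).hu))
      have htPF : (arc d hfin F).t ∈ Pset d hfin (arc d hfin E).e := by
        rw [← hee]; exact (arc d hfin F).ht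
      have huPF : (arc d hfin F).u ∈ Pset d hfin (arc d hfin E).e := by
        rw [← hee]; exact (arc d hfin F).hu
      have htPE : (arc d hfin E).t ∈ Pset d hfin (arc d hfin F).e := by
        rw [hee]; exact (arc d hfin E).ht
      have huPE : (arc d hfin E).u ∈ Pset d hfin (arc d hfin F).e := by
        rw [hee]; exact (arc d hfin E).hu
      have htF : (arc d hfin F).t < r :=
        lt_of_le_of_ne hr1' (fun h => hrP (h ▸ htPF))
      have huF : r < (arc d hfin F).u :=
        lt_of_le_of_ne hr2' (fun h => hrP (h.symm ▸ huPF))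
      have hts : (arc d hfin E).t = (arc d hfin F).t := by
        rcases lt_trichotomy (arc d hfin E).t (arc d hfin F).t with h | h | h
        · exact absurd ⟨h, htF.trans huE⟩ ((arc d hfin E).hbet _ htPF)
        · exact h
        · exact absurd ⟨h, htE.trans huF⟩ ((arc d hfin F).hbet _ htPE)
      have hus : (arc d hfin E).u = (arc d hfin F).u := by
        rcases lt_trichotomy (arc d hfin E).u (arc d hfin F).u with h | h | h
        · exact absurd ⟨htF.trans huE, h⟩ ((arc d hfin F).hbet _ huPE)
        · exact h
        · exact absurd ⟨htE.trans huF, h⟩ ((arc d hfin E).hbet _ huPF)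
      have hbb : (arc d hfin E).b = (arc d hfin F).b := by
        apply nodeRel_unique d (arc d hfin E).hb (arc d hfin F).hb
        rw [hee, hts]
      have hcc : (arc d hfin E).c = (arc d hfin F).c := by
        apply nodeRel_unique d (arc d hfin E).hc (arc d hfin F).hc
        rw [hee, hus]
      apply hEF
      apply Subtype.ext
      rw [(arc d hfin E).hE, (arc d hfin F).hE, hbb, hcc]
  · -- different underlying edges
    by_cases hcv : ∃ v : α, d.vmap v = p ∧ v ∈ ((arc d hfin E).e : Sym2 α) ∧
        v ∈ ((arc d hfin F).e : Sym2 α)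
    · obtain ⟨v, hv1, hv2, hv3⟩ := hcv
      have hwE : nodeRel d (arc d hfin E).e r (Sum.inl v) :=
        Or.inl ⟨v, rfl, hv1.trans hre.symm⟩
      have hwF : nodeRel d (arc d hfin F).e r' (Sum.inl v) :=
        Or.inl ⟨v, rfl, hv1.trans hre'.symm⟩
      exact ⟨Sum.inl v, hv1, node_in_edge d hfin hwE hr1 hr2, node_in_edge d hfin hwF hr1' hr2'⟩
    · have hmem : (p, s((arc d hfin E).e, (arc d hfin F).e)) ∈ d.crossings :=
        ⟨(arc d hfin E).e, (arc d hfin F).e, rfl, fun h => hee h.symm, ⟨r, hre⟩, ⟨r', hre'⟩, hcv⟩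
      set c : ↥d.crossings := ⟨_, hmem⟩ with hc
      have hwE : nodeRel d (arc d hfin E).e r (Sum.inr c) :=
        Or.inr ⟨c, rfl, Sym2.mem_mk_left _ _, hre.symm⟩
      have hwF : nodeRel d (arc d hfin F).e r' (Sum.inr c) :=
        Or.inr ⟨c, rfl, Sym2.mem_mk_right _ _, hre'.symm⟩
      exact ⟨Sum.inr c, rfl, node_in_edge d hfin hwE hr1 hr2,
        node_in_edge d hfin hwF hr1' hr2'⟩

/-- The crossing-free drawing of the planarization. -/
noncomputable def drawingH : Drawing (Hgraph d hfin) where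
  vmap := vmapβ d
  vmap_inj := vmapβ_inj d
  emap := arcCurve d hfin
  emap_inj E := subArc_inj d (Subtype.coe_lt_coe.2 (arc d hfin E).htu)
  endpoints E := ⟨(arc d hfin E).b, (arc d hfin E).c, (arc d hfin E).hE, by
      show subArc d _ _ _ _ 0 = _
      rw [subArc_zero]
      exact (nodeRel_point d (arc d hfin E).hb).symm, by
      show subArc d _ _ _ _ 1 = _
      rw [subArc_one]
      exact (nodeRel_point d (arc d hfin E).hc).symm⟩
  vertex_hit E w hw := by
    obtain ⟨r, h1, h2, hre⟩ := subArc_range d hw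
    have hrel : nodeRel d (arc d hfin E).e r w := by
      cases w with
      | inl v => exact Or.inl ⟨v, rfl, hre.symm⟩
      | inr c =>
        have hm : (arc d hfin E).e ∈ (c : (ℝ × ℝ) × Sym2 G.edgeSet).2 :=
          mem_pair_of_mem_range d ⟨r, hre⟩
        exact Or.inr ⟨c, rfl, hm, hre.symm⟩
    exact node_in_edge d hfin hrel h1 h2
  no_triple E F G' p hEF hEG hFG hpE hpF hpG := by
    obtain ⟨w1, hw1, h1E, h1F⟩ := arcs_meet d hfin hEF hpE hpF
    obtain ⟨w2, hw2, h2E, h2G⟩ := arcs_meet d hfin hEG hpE hpG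
    have hww : w1 = w2 := vmapβ_inj d (hw1.trans hw2.symm)
    exact ⟨w1, hw1, h1E, h1F, hww ▸ h2G⟩

lemma drawingH_crossings : (drawingH d hfin).crossings = ∅ := by
  rw [Set.eq_empty_iff_forall_notMem]
  rintro ⟨p, q⟩ ⟨E, F, hq, hEF, hpE, hpF, hnw⟩
  exact hnw (arcs_meet d hfin hEF hpE hpF)

lemma Hgraph_planar : (Hgraph d hfin).IsPlanar :=
  ⟨drawingH d hfin, drawingH_crossings d hfin⟩


noncomputable def srcv (e : G.edgeSet) : α := (d.endpoints e).choose

noncomputable def tgtv (e : G.edgeSet) : α := (d.endpoints e).choose_spec.choose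

lemma endpoint_spec (e : G.edgeSet) : (e : Sym2 α) = s(srcv d e, tgtv d e) ∧
    d.emap e 0 = d.vmap (srcv d e) ∧ d.emap e 1 = d.vmap (tgtv d e) :=
  (d.endpoints e).choose_spec.choose_spec

noncomputable def bagOf : Sym2 G.edgeSet → Finset α :=
  Sym2.lift ⟨fun e f => {tgtv d e, tgtv d f}, fun e f => Finset.pair_comm _ _⟩

lemma mem_bagOf {q : Sym2 G.edgeSet} {v : α} :
    v ∈ bagOf d q ↔ ∃ e, e ∈ q ∧ tgtv d e = v := by
  induction q using Sym2.ind with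
  | _ e f =>
    simp only [bagOf, Sym2.lift_mk, Finset.mem_insert, Finset.mem_singleton, Sym2.mem_iff]
    constructor
    · rintro (h | h)
      · exact ⟨e, Or.inl rfl, h.symm⟩
      · exact ⟨f, Or.inr rfl, h.symm⟩
    · rintro ⟨g, (rfl | rfl), h⟩
      · exact Or.inl h.symm
      · exact Or.inr h.symm

lemma bagOf_card (q : Sym2 G.edgeSet) : (bagOf d q).card ≤ 2 := by
  induction q using Sym2.ind with
  | _ e f =>
    show ({tgtv d e, tgtv d f} : Finset α).card ≤ 2
    exact le_trans (Finset.card_insert_le _ _) (by simp)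

noncomputable def bags : Bt d → Finset α :=
  Sum.elim (fun v => {v}) (fun c => bagOf d (c : (ℝ × ℝ) × Sym2 G.edgeSet).2)

lemma node_at_one {e : G.edgeSet} {b : Bt d} (h : nodeRel d e 1 b) :
    b = Sum.inl (tgtv d e) := by
  rcases h with ⟨w, rfl, hw⟩ | ⟨c, rfl, _, hc⟩
  · have : w = tgtv d e := d.vmap_inj (hw.trans (endpoint_spec d e).2.2)
    rw [this]
  · exact absurd (((endpoint_spec d e).2.2 ▸ hc) : _ = d.vmap (tgtv d e)).symm
      (vertex_ne_cross d (tgtv d e) c)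

lemma node_mid {e : G.edgeSet} {t : unitInterval} {b : Bt d} (h : nodeRel d e t b)
    (h0 : t ≠ 0) (h1 : t ≠ 1) :
    ∃ c : ↥d.crossings, b = Sum.inr c ∧ e ∈ (c : (ℝ × ℝ) × Sym2 G.edgeSet).2 := by
  rcases h with ⟨w, rfl, hw⟩ | ⟨c, rfl, hc, _⟩
  · exfalso
    have hwe : w ∈ (e : Sym2 α) := d.vertex_hit e w ⟨t, hw.symm⟩
    rw [(endpoint_spec d e).1, Sym2.mem_iff] at hwe
    rcases hwe with rfl | rfl
    · exact h0 (d.emap_inj e (by rw [← hw, (endpoint_spec d e).2.1]))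
    · exact h1 (d.emap_inj e (by rw [← hw, (endpoint_spec d e).2.2]))
  · exact ⟨c, rfl, hc⟩

lemma node_mem_S {v : α} {e : G.edgeSet} {t : unitInterval} {b : Bt d}
    (htgt : tgtv d e = v) (hrel : nodeRel d e t b) (ht0 : 0 < t) : v ∈ bags d b := by
  by_cases ht1 : t = 1
  · subst ht1
    rw [node_at_one d hrel]
    show v ∈ ({tgtv d e} : Finset α)
    rw [htgt]
    exact Finset.mem_singleton_self v
  · obtain ⟨c, rfl, hce⟩ := node_mid d hrel (ne_of_gt ht0) ht1
    show v ∈ bagOf d (c : (ℝ × ℝ) × Sym2 G.edgeSet).2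
    exact (mem_bagOf d).2 ⟨e, hce, htgt⟩

lemma zero_lt_one_I : (0 : unitInterval) < 1 := by
  rw [← Subtype.coe_lt_coe]
  norm_num

lemma walk (v : α) (hv : Sum.inl v ∈ {x : Bt d | v ∈ bags d x}) :
    ∀ n : ℕ, ∀ e : G.edgeSet, tgtv d e = v → ∀ t : unitInterval, t ∈ Pset d hfin e → 0 < t →
    ((Pset d hfin e).filter (fun s => t < s)).card = n →
    ∀ b, nodeRel d e t b → ∀ hb : b ∈ {x : Bt d | v ∈ bags d x},
    ((Hgraph d hfin).induce {x : Bt d | v ∈ bags d x}).Reachable ⟨b, hb⟩ ⟨Sum.inl v, hv⟩ := by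
  intro n
  induction n using Nat.strong_induction_on with
  | _ n ih =>
    intro e htgt t htP ht0 hcard b hrel hb
    by_cases ht1 : t = 1
    · subst ht1
      have hbv : b = Sum.inl v := htgt ▸ node_at_one d hrel
      subst hbv
      have : (⟨Sum.inl v, hb⟩ : {x : Bt d | v ∈ bags d x}) = ⟨Sum.inl v, hv⟩ := rfl
      rw [this]
    · have htlt1 : t < 1 := lt_of_le_of_ne (by rw [← Subtype.coe_le_coe]; exact t.2.2) ht1
      have h1Q : (1 : unitInterval) ∈ (Pset d hfin e).filter (fun s => t < s) :=
        Finset.mem_filter.2 ⟨one_mem_Pset d hfin e, htlt1⟩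
      have hQne : ((Pset d hfin e).filter (fun s => t < s)).Nonempty := ⟨1, h1Q⟩
      set t' := ((Pset d hfin e).filter (fun s => t < s)).min' hQne with ht'def
      have ht'Q : t' ∈ (Pset d hfin e).filter (fun s => t < s) := Finset.min'_mem _ hQne
      have ht'P : t' ∈ Pset d hfin e := (Finset.mem_filter.1 ht'Q).1
      have htt' : t < t' := (Finset.mem_filter.1 ht'Q).2
      have hbet : ∀ s ∈ Pset d hfin e, ¬(t < s ∧ s < t') := by
        rintro s hs ⟨hs1, hs2⟩
        exact absurd (Finset.min'_le _ s (Finset.mem_filter.2 ⟨hs, hs1⟩)) (not_le.2 hs2)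
      obtain ⟨b', hrel'⟩ := nodeRel_exists d hfin ht'P
      have hb' : b' ∈ {x : Bt d | v ∈ bags d x} :=
        node_mem_S d htgt hrel' (lt_trans ht0 htt')
      have hne : b ≠ b' := by
        intro h
        have h1 := nodeRel_point d hrel
        have h2 := nodeRel_point d hrel'
        rw [h, h2] at h1
        exact absurd (d.emap_inj e h1.symm) (ne_of_lt htt')
      have hAdj : (Hgraph d hfin).Adj b b' := by
        rw [Hgraph, SimpleGraph.fromRel_adj]
        exact ⟨hne, Or.inl ⟨e, t, t', htt', htP, ht'P, hbet, hrel, hrel'⟩⟩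
      have step : ((Hgraph d hfin).induce {x : Bt d | v ∈ bags d x}).Adj ⟨b, hb⟩ ⟨b', hb'⟩ := hAdj
      have hlt : ((Pset d hfin e).filter (fun s => t' < s)).card < n := by
        rw [← hcard]
        apply Finset.card_lt_card
        constructor
        · intro s hs
          have hs' := Finset.mem_filter.1 hs
          exact Finset.mem_filter.2 ⟨hs'.1, lt_trans htt' hs'.2⟩
        · intro hsub
          have := hsub ht'Q
          exact absurd (Finset.mem_filter.1 this).2 (lt_irrefl t')
      have reach' := ih _ hlt e htgt t' ht'P (lt_trans ht0 htt') rfl b' hrel' hb'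
      exact (step.reachable).trans reach'

lemma decomp_conn (v : α) :
    ((Hgraph d hfin).induce {x : Bt d | v ∈ bags d x}).Connected := by
  have hv : Sum.inl v ∈ {x : Bt d | v ∈ bags d x} := by
    show v ∈ ({v} : Finset α)
    exact Finset.mem_singleton_self v
  rw [SimpleGraph.connected_iff]
  refine ⟨?_, ⟨⟨Sum.inl v, hv⟩⟩⟩
  have key : ∀ x : {x : Bt d | v ∈ bags d x},
      ((Hgraph d hfin).induce {x : Bt d | v ∈ bags d x}).Reachable x ⟨Sum.inl v, hv⟩ := by
    rintro ⟨b, hb⟩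
    cases b with
    | inl u =>
      have hu : v = u := Finset.mem_singleton.1 hb
      subst hu
      rfl
    | inr c =>
      obtain ⟨e, hce, htgt⟩ := (mem_bagOf d).1 hb
      have hrel : nodeRel d e (par d e c) (Sum.inr c) :=
        Or.inr ⟨c, rfl, hce, (par_spec d hce).symm⟩
      have ht0 : 0 < par d e c := by
        have hne0 : par d e c ≠ 0 := by
          intro h
          have := par_spec d hce
          rw [h, (endpoint_spec d e).2.1] at this
          exact vertex_ne_cross d (srcv d e) c this
        have hle : (0 : unitInterval) ≤ par d e c := by
          rw [← Subtype.coe_le_coe]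
          exact (par d e c).2.1
        exact lt_of_le_of_ne hle (Ne.symm hne0)
      exact walk d hfin v hv _ e htgt (par d e c) (par_mem_Pset d hfin hce) ht0 rfl
        (Sum.inr c) hrel hb
  intro x y
  exact (key x).trans (key y).symm

lemma decomp_touch {v w : α} (hvw : G.Adj v w) :
    ∃ b c : Bt d, v ∈ bags d b ∧ w ∈ bags d c ∧ (b = c ∨ (Hgraph d hfin).Adj b c) := by
  set e : G.edgeSet := ⟨s(v, w), hvw⟩ with he
  have hsp := endpoint_spec d e
  have hst : (srcv d e = v ∧ tgtv d e = w) ∨ (srcv d e = w ∧ tgtv d e = v) := by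
    have h : s(v, w) = s(srcv d e, tgtv d e) := hsp.1
    rw [Sym2.eq_iff] at h
    tauto
  have h1Q : (1 : unitInterval) ∈ (Pset d hfin e).filter (fun s => 0 < s) :=
    Finset.mem_filter.2 ⟨one_mem_Pset d hfin e, zero_lt_one_I⟩
  have hQne : ((Pset d hfin e).filter (fun s => 0 < s)).Nonempty := ⟨1, h1Q⟩
  set t1 := ((Pset d hfin e).filter (fun s => 0 < s)).min' hQne with ht1def
  have ht1Q : t1 ∈ (Pset d hfin e).filter (fun s => 0 < s) := Finset.min'_mem _ hQne
  have ht1P : t1 ∈ Pset d hfin e := (Finset.mem_filter.1 ht1Q).1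
  have ht10 : 0 < t1 := (Finset.mem_filter.1 ht1Q).2
  have hbet : ∀ s ∈ Pset d hfin e, ¬((0 : unitInterval) < s ∧ s < t1) := by
    rintro s hs ⟨hs1, hs2⟩
    exact absurd (Finset.min'_le _ s (Finset.mem_filter.2 ⟨hs, hs1⟩)) (not_le.2 hs2)
  obtain ⟨b1, hrel1⟩ := nodeRel_exists d hfin ht1P
  have hrel0 : nodeRel d e 0 (Sum.inl (srcv d e)) := Or.inl ⟨_, rfl, hsp.2.1.symm⟩
  have hne : Sum.inl (srcv d e) ≠ b1 := by
    intro h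
    have h1 := nodeRel_point d hrel0
    have h2 := nodeRel_point d hrel1
    rw [h, h2] at h1
    exact absurd (d.emap_inj e h1.symm) (ne_of_lt ht10)
  have hAdj : (Hgraph d hfin).Adj (Sum.inl (srcv d e)) b1 := by
    exact (SimpleGraph.fromRel_adj ..).2 ⟨hne, Or.inl ⟨e, 0, t1, ht10, zero_mem_Pset d hfin e, ht1P, hbet, hrel0, hrel1⟩⟩
  have hb1 : tgtv d e ∈ bags d b1 := node_mem_S d rfl hrel1 ht10
  rcases hst with ⟨hs, htg⟩ | ⟨hs, htg⟩
  · refine ⟨Sum.inl (srcv d e), b1, ?_, htg ▸ hb1, Or.inr hAdj⟩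
    show v ∈ ({srcv d e} : Finset α)
    rw [hs]
    exact Finset.mem_singleton_self v
  · refine ⟨b1, Sum.inl (srcv d e), htg ▸ hb1, ?_, Or.inr hAdj.symm⟩
    show w ∈ ({srcv d e} : Finset α)
    rw [hs]
    exact Finset.mem_singleton_self w

/-- The planar decomposition obtained from a drawing with finitely many crossings. -/
noncomputable def decomp [Fintype α] : Decomposition G where
  B := Bt d
  fin := letI := hfin.fintype; inferInstanceAs (Fintype (α ⊕ ↥d.crossings))
  graph := Hgraph d hfin
  bags := bags d
  conn := decomp_conn d hfin
  touch := fun _ _ h => decomp_touch d hfin h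

lemma decomp_planar [Fintype α] : (decomp d hfin).IsPlanar := Hgraph_planar d hfin

lemma decomp_width [Fintype α] : (decomp d hfin).width ≤ 2 := by
  apply ciSup_le'
  rintro (u | c)
  · show ({u} : Finset α).card ≤ 2
    simp
  · exact bagOf_card d _

lemma decomp_order [Fintype α] :
    ((decomp d hfin).order : ℕ∞) = (Fintype.card α : ℕ∞) + d.crossings.encard := by
  letI := hfin.fintype
  have h1 : (decomp d hfin).order = Fintype.card α + Fintype.card ↥d.crossings := by
    rw [Decomposition.order]
    exact Fintype.card_sum
  have h2 : d.crossings.encard = (Fintype.card ↥d.crossings : ℕ∞) := by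
    rw [Set.encard_eq_coe_toFinset_card]
    congr 1
    exact Set.Finite.card_toFinset hfin
  rw [h1, h2]
  push_cast
  rfl

end Surgery

end CrossAux

/-- Every graph `G` has a planar decomposition of width `2` and order `|V(G)| + cr(G)`. -/
theorem stmt11 {α : Type} [Fintype α] (G : SimpleGraph α) :
    ∃ W : Decomposition G, W.IsPlanar ∧ W.width ≤ 2 ∧
      (W.order : ℕ∞) = (Fintype.card α : ℕ∞) + crossingNumber G := by
  classical
  have hne := CrossAux.crossingNumber_ne_top G
  have hex : ∃ d : Drawing G, d.numCrossings = crossingNumber G := by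
    obtain ⟨m, hm, hmin⟩ := (wellFounded_lt (α := ℕ∞)).has_min
      (Set.range fun d : Drawing G => d.numCrossings) ⟨_, ⟨CrossAux.drawing0 G, rfl⟩⟩
    obtain ⟨d, rfl⟩ := hm
    refine ⟨d, le_antisymm ?_ (iInf_le _ d)⟩
    exact le_iInf fun d' => not_lt.1 (hmin _ ⟨d', rfl⟩)
  obtain ⟨d, hd⟩ := hex
  have hfin : d.crossings.Finite := by
    rw [← Set.encard_ne_top_iff]
    show d.numCrossings ≠ ⊤
    rw [hd]
    exact hne
  refine ⟨CrossAux.decomp d hfin, CrossAux.decomp_planar d hfin,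
    CrossAux.decomp_width d hfin, ?_⟩
  rw [CrossAux.decomp_order d hfin, ← hd]
  rfl
end

section
/- Let D be a decomposition of a graph G with width k. Let G' be the graph with one vertex for each occurrence of a vertex of G in a bag of D, where a vertex x of G' lying in bag X and a distinct vertex y of G' lying in bag Y are adjacent in G' if and only if X = Y or XY is an edge of D. Then G is a minor of G', the maximum degree of G' satisfies Δ(G') ≤ (Δ(D)+1)·k − 1, and D defines a decomposition of G' with width k (which is planar if D is planar). -/
open scoped Classical

/-- The graph `G'` obtained from a decomposition `W` of `G`, with one vertex for each
occurrence of a vertex of `G` in a bag, where distinct vertices are adjacent iff they lie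
in the same bag or in adjacent bags. -/
def Decomposition.expand {α : Type} {G : SimpleGraph α} (W : Decomposition G) :
    SimpleGraph (Σ b : W.B, {v : α // v ∈ W.bags b}) :=
  SimpleGraph.fromRel fun x y => x.1 = y.1 ∨ W.graph.Adj x.1 y.1

/-- Let `D` be a decomposition of a graph `G` with width `k`, and let `G'` be the graph
with one vertex for each occurrence of a vertex of `G` in a bag of `D`, where a vertex in
bag `X` and a distinct vertex in bag `Y` are adjacent iff `X = Y` or `XY` is an edge of
`D`. Then `G` is a minor of `G'`, `Δ(G') ≤ (Δ(D)+1)·k − 1`, and `D` defines a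
decomposition of `G'` with width `k`, which is planar if `D` is planar. -/
theorem stmt14 {α : Type} [Fintype α] (G : SimpleGraph α) (k : ℕ)
    (W : Decomposition G) (hk : W.width ≤ k) :
    G.MinorOf W.expand ∧
    W.expand.maxDeg ≤ (W.degree + 1) * k - 1 ∧
    ∃ W' : Decomposition W.expand,
      Nonempty (W'.graph ≃g W.graph) ∧ W'.width ≤ k ∧ (W.IsPlanar → W'.IsPlanar) := by
  letI := W.fin
  have hadj : ∀ x y, W.expand.Adj x y ↔ x ≠ y ∧ (x.1 = y.1 ∨ W.graph.Adj x.1 y.1) := by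
    intro x y
    simp only [Decomposition.expand, SimpleGraph.fromRel_adj]
    constructor
    · rintro ⟨h, (h2 | h2) | (h2 | h2)⟩
      · exact ⟨h, Or.inl h2⟩
      · exact ⟨h, Or.inr h2⟩
      · exact ⟨h, Or.inl h2.symm⟩
      · exact ⟨h, Or.inr h2.symm⟩
    · rintro ⟨h, h2⟩; exact ⟨h, Or.inl h2⟩
  have hbag : ∀ b, (W.bags b).card ≤ k := fun b =>
    le_trans (le_ciSup (f := fun b => (W.bags b).card)
      (Set.Finite.bddAbove (Set.finite_range _)) b)
      (show (⨆ b : W.B, (W.bags b).card) ≤ k from hk)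
  have hdeg : ∀ b, (W.graph.neighborSet b).ncard ≤ W.degree :=
    fun b => show _ ≤ ⨆ b : W.B, (W.graph.neighborSet b).ncard from
      le_ciSup (f := fun b => (W.graph.neighborSet b).ncard)
        (Set.Finite.bddAbove (Set.finite_range _)) b
  refine ⟨?_, ?_, ?_⟩
  · -- minor
    refine ⟨fun v => {x | x.2.1 = v}, ?_, ?_, ?_⟩
    · intro v
      have iso : W.graph.induce {b : W.B | v ∈ W.bags b} ≃g
          W.expand.induce {x | x.2.1 = v} := by
        refine ⟨⟨fun b => ⟨⟨b.1, ⟨v, b.2⟩⟩, rfl⟩,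
          fun x => ⟨x.1.1, by have h := x.1.2.2; rwa [x.2] at h⟩, ?_, ?_⟩, ?_⟩
        · intro b; rfl
        · rintro ⟨⟨b, ⟨w, hw⟩⟩, hx⟩
          simp only [Set.mem_setOf_eq] at hx
          subst hx; rfl
        · rintro ⟨b, hb⟩ ⟨c, hc⟩
          have key : W.graph.Adj b c ↔ W.expand.Adj ⟨b, ⟨v, hb⟩⟩ ⟨c, ⟨v, hc⟩⟩ := by
            rw [hadj]
            constructor
            · intro h
              refine ⟨?_, Or.inr h⟩
              intro heq
              exact h.ne (congrArg Sigma.fst heq)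
            · rintro ⟨hne, heq | h⟩
              · exact absurd (by cases heq; rfl) hne
              · exact h
          exact key.symm
      exact iso.connected_iff.mp (W.conn v)
    · intro v w hvw
      rw [Set.disjoint_left]
      rintro x (hv : x.2.1 = v) (hw : x.2.1 = w)
      exact hvw (hv.symm.trans hw)
    · intro v w hvw
      obtain ⟨b, c, hb, hc, hbc⟩ := W.touch hvw
      refine ⟨⟨b, ⟨v, hb⟩⟩, rfl, ⟨c, ⟨w, hc⟩⟩, rfl, ?_⟩
      rw [hadj]
      refine ⟨?_, hbc⟩
      intro heq
      exact hvw.ne (congrArg (fun z : (Σ b : W.B, {v : α // v ∈ W.bags b}) => z.2.1) heq)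
  · -- degree bound
    refine ciSup_le' fun x => ?_
    classical
    set T : Finset W.B := insert x.1 (W.graph.neighborSet x.1).toFinset with hT
    set S : Finset (Σ b : W.B, {v : α // v ∈ W.bags b}) :=
      T.sigma (fun b => (W.bags b).attach) with hS
    have hxS : x ∈ S := by
      rw [hS, Finset.mem_sigma]
      exact ⟨Finset.mem_insert_self _ _, Finset.mem_attach _ _⟩
    have hsub : W.expand.neighborSet x ⊆ ↑(S.erase x) := by
      intro y hy
      rw [SimpleGraph.mem_neighborSet, hadj] at hy
      obtain ⟨hne, heq | hA⟩ := hy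
      · refine Finset.mem_coe.mpr (Finset.mem_erase.mpr ⟨hne.symm, ?_⟩)
        rw [hS, Finset.mem_sigma]
        exact ⟨by rw [hT]; exact Finset.mem_insert.mpr (Or.inl heq.symm),
          Finset.mem_attach _ _⟩
      · refine Finset.mem_coe.mpr (Finset.mem_erase.mpr ⟨hne.symm, ?_⟩)
        rw [hS, Finset.mem_sigma]
        refine ⟨?_, Finset.mem_attach _ _⟩
        rw [hT]
        refine Finset.mem_insert.mpr (Or.inr ?_)
        rw [Set.mem_toFinset]
        exact hA
    have h1 : (W.expand.neighborSet x).ncard ≤ (S.erase x).card := by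
      rw [← Set.ncard_coe_finset]
      exact Set.ncard_le_ncard hsub (Finset.finite_toSet _)
    have h2 : (S.erase x).card = S.card - 1 := Finset.card_erase_of_mem hxS
    have h3 : S.card ≤ (W.degree + 1) * k := by
      rw [hS, Finset.card_sigma]
      calc ∑ b ∈ T, (W.bags b).attach.card ≤ T.card * k := by
            rw [← smul_eq_mul]
            exact Finset.sum_le_card_nsmul _ _ _ fun b _ => by
              rw [Finset.card_attach]; exact hbag b
        _ ≤ (W.degree + 1) * k := by
            refine Nat.mul_le_mul_right _ ?_
            calc T.card ≤ (W.graph.neighborSet x.1).toFinset.card + 1 :=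
                  Finset.card_insert_le _ _
              _ ≤ W.degree + 1 := by
                  refine Nat.add_le_add_right ?_ 1
                  rw [← Set.ncard_eq_toFinset_card']
                  exact hdeg x.1
    calc (W.expand.neighborSet x).ncard ≤ S.card - 1 := h2 ▸ h1
      _ ≤ (W.degree + 1) * k - 1 := Nat.sub_le_sub_right h3 1
  · -- decomposition of expand
    have singleton_conn : ∀ {β : Type} (H : SimpleGraph β) (a : β),
        (H.induce {a}).Connected := by
      intro β H a
      haveI : Nonempty ({a} : Set β) := ⟨⟨a, rfl⟩⟩
      refine ⟨fun u v => ?_⟩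
      rw [show u = v from Subtype.ext (u.2.trans v.2.symm)]
    refine ⟨⟨W.B, W.fin, W.graph,
      fun b => (W.bags b).attach.map ⟨Sigma.mk b, sigma_mk_injective⟩, ?_, ?_⟩, ?_, ?_, ?_⟩
    · intro x
      have hset : {b : W.B | x ∈ (W.bags b).attach.map ⟨Sigma.mk b, sigma_mk_injective⟩}
          = {x.1} := by
        ext c
        simp only [Set.mem_setOf_eq, Finset.mem_map, Finset.mem_attach,
          Function.Embedding.coeFn_mk, Set.mem_singleton_iff]
        constructor
        · rintro ⟨a, -, rfl⟩; rfl
        · rintro rfl; exact ⟨x.2, trivial, rfl⟩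
      rw [hset]
      exact singleton_conn _ _
    · intro x y hxy
      rw [hadj] at hxy
      refine ⟨x.1, y.1, ?_, ?_, ?_⟩
      · exact Finset.mem_map_of_mem _ (Finset.mem_attach _ x.2)
      · exact Finset.mem_map_of_mem _ (Finset.mem_attach _ y.2)
      · exact hxy.2
    · exact ⟨⟨Equiv.refl _, Iff.rfl⟩⟩
    · refine ciSup_le' fun b => ?_
      rw [Finset.card_map, Finset.card_attach]
      exact hbag b
    · exact id
end
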